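/- Let α1, β1, α2, β2 > 0 and let U ~ Beta(α1,β1) and V ~ Beta(α2,β2) be independent. Then R = V/U has a density f on (0,∞) given by: for 0 < R ≤ 1, f(R) = R^{α2-1}/(B(α1,β1)B(α2,β2)) · ∫₀¹ u^{α1+α2-1}(1-u)^{β1-1}(1-Ru)^{β2-1} du; and for R > 1, f(R) = R^{-(α1+1)}/(B(α1,β1)B(α2,β2)) · ∫₀¹ v^{α1+α2-1}(1-v)^{β2-1}(1-v/R)^{β1-1} dv. -/

import Mathlib

open MeasureTheory ProbabilityTheory

/-- The Beta function `B(a,b) = Γ(a)Γ(b)/Γ(a+b)`. -/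
noncomputable def betaFn (a b : ℝ) : ℝ := Real.Gamma a * Real.Gamma b / Real.Gamma (a + b)

/-- The law of a `Beta(a,b)` random variable: density `x^{a-1}(1-x)^{b-1}/B(a,b)`
on `(0,1)` with respect to Lebesgue measure. -/
noncomputable def betaLaw (a b : ℝ) : Measure ℝ :=
  volume.withDensity (fun x => ENNReal.ofReal
    (Set.indicator (Set.Ioo (0 : ℝ) 1) (fun t => t ^ (a - 1) * (1 - t) ^ (b - 1) / betaFn a b) x))

/-!
The joint law of `(U, V)` has density `f(u) g(v)`; substituting `v = u r` in the inner integral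
shows that `V / U` has density `r ↦ ∫ f(u) |u| g(u r) du`. For Beta densities and `0 < r ≤ 1` the
constraint `u r < 1` is automatic on `(0, 1)`, which gives the first formula; for `r > 1` the
further substitution `u = v / r` makes the constraint `v / r < 1` automatic and gives the second.
This density has total mass `1`, so it is finite almost everywhere, and wherever it is finite its
Lebesgue integrals are the Bochner integrals of the statement.
-/

open Set
open scoped ENNReal

theorem lintegral_eq_ofReal_abs_mul_lintegral_comp_mul_left {c : ℝ} (hc : c ≠ 0)
    (h : ℝ → ℝ≥0∞) : ∫⁻ x, h x = ENNReal.ofReal |c| * ∫⁻ x, h (c * x) := by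
  have hmap : ∫⁻ x, h (c * x) = ENNReal.ofReal |c⁻¹| * ∫⁻ x, h x := by
    rw [← smul_eq_mul, ← lintegral_smul_measure, ← Real.map_volume_mul_left hc,
      ← MeasurableEquiv.coe_mulLeft₀ hc, lintegral_map_equiv]
    rfl
  rw [hmap, ← mul_assoc, ← ENNReal.ofReal_mul (abs_nonneg c), ← abs_mul, mul_inv_cancel₀ hc,
    abs_one, ENNReal.ofReal_one, one_mul]

noncomputable def ratioDensity (f g : ℝ → ℝ≥0∞) (r : ℝ) : ℝ≥0∞ :=
  ∫⁻ u, f u * ENNReal.ofReal |u| * g (u * r)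

theorem measurable_ratioDensity {f g : ℝ → ℝ≥0∞} (hf : Measurable f) (hg : Measurable g) :
    Measurable (ratioDensity f g) :=
  Measurable.lintegral_prod_left (by fun_prop)

theorem map_div_prod_withDensity {f g : ℝ → ℝ≥0∞} (hf : Measurable f) (hg : Measurable g) :
    (((volume : Measure ℝ).withDensity f).prod ((volume : Measure ℝ).withDensity g)).map
      (fun p => p.2 / p.1) = volume.withDensity (ratioDensity f g) := by
  ext s hs
  have hT : MeasurableSet ((fun p : ℝ × ℝ => p.2 / p.1) ⁻¹' s) :=
    measurable_snd.div measurable_fst hs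
  calc (((volume : Measure ℝ).withDensity f).prod ((volume : Measure ℝ).withDensity g)).map
        (fun p => p.2 / p.1) s
      = ∫⁻ p : ℝ × ℝ, f p.1 * g p.2 * s.indicator 1 (p.2 / p.1) ∂(volume.prod volume) := by
        rw [Measure.map_apply (by fun_prop) hs, prod_withDensity hf hg, withDensity_apply _ hT,
          ← lintegral_indicator hT]
        congr 1 with p
        by_cases hp : p.2 / p.1 ∈ s <;> simp [hp]
    _ = ∫⁻ u, ∫⁻ v, f u * g v * s.indicator 1 (v / u) :=
        lintegral_prod _ (by fun_prop)
    _ = ∫⁻ u, ∫⁻ r, f u * ENNReal.ofReal |u| * g (u * r) * s.indicator 1 r := by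
        refine lintegral_congr_ae ((Measure.ae_ne volume 0).mono fun u (hu : u ≠ 0) => ?_)
        dsimp only
        rw [lintegral_eq_ofReal_abs_mul_lintegral_comp_mul_left hu,
          ← lintegral_const_mul' _ _ ENNReal.ofReal_ne_top]
        congr 1 with r
        rw [mul_div_cancel_left₀ r hu]
        ring
    _ = ∫⁻ r, ∫⁻ u, f u * ENNReal.ofReal |u| * g (u * r) * s.indicator 1 r :=
        lintegral_lintegral_swap (by fun_prop)
    _ = ∫⁻ r in s, ratioDensity f g r := by
        rw [← lintegral_indicator hs]
        congr 1 with r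
        rw [lintegral_mul_const _ (by fun_prop)]
        by_cases hr : r ∈ s <;> simp [hr, ratioDensity]
    _ = volume.withDensity (ratioDensity f g) s := (withDensity_apply _ hs).symm

theorem ofReal_setIntegral_eq_setLIntegral {α : Type*} [MeasurableSpace α] {μ : Measure α}
    {s : Set α} (hs : MeasurableSet s) {f : α → ℝ} (hf : AEStronglyMeasurable f (μ.restrict s))
    (hnn : ∀ x ∈ s, 0 ≤ f x) (hfin : ∫⁻ x in s, ENNReal.ofReal (f x) ∂μ ≠ ∞) :
    ENNReal.ofReal (∫ x in s, f x ∂μ) = ∫⁻ x in s, ENNReal.ofReal (f x) ∂μ := by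
  rw [integral_eq_lintegral_of_nonneg_ae (ae_restrict_of_forall_mem hs hnn) hf,
    ENNReal.ofReal_toReal hfin]

theorem betaFn_pos {a b : ℝ} (ha : 0 < a) (hb : 0 < b) : 0 < betaFn a b :=
  div_pos (mul_pos (Real.Gamma_pos_of_pos ha) (Real.Gamma_pos_of_pos hb))
    (Real.Gamma_pos_of_pos (add_pos ha hb))

noncomputable def betaDensity (a b : ℝ) (x : ℝ) : ℝ≥0∞ :=
  ENNReal.ofReal
    ((Ioo (0 : ℝ) 1).indicator (fun t => t ^ (a - 1) * (1 - t) ^ (b - 1) / betaFn a b) x)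

theorem betaLaw_eq_withDensity (a b : ℝ) : betaLaw a b = volume.withDensity (betaDensity a b) :=
  rfl

theorem measurable_betaDensity (a b : ℝ) : Measurable (betaDensity a b) :=
  ((Measurable.indicator (by fun_prop) measurableSet_Ioo)).ennreal_ofReal

theorem betaDensity_of_notMem {a b x : ℝ} (hx : x ∉ Ioo (0 : ℝ) 1) : betaDensity a b x = 0 := by
  rw [betaDensity, indicator_of_notMem hx, ENNReal.ofReal_zero]

theorem rpow_sub_one_mul_self_mul_rpow_sub_one {u : ℝ} (hu : 0 < u) (a b : ℝ) :
    u ^ (a - 1) * u * u ^ (b - 1) = u ^ (a + b - 1) := by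
  rw [← Real.rpow_add_one hu.ne', ← Real.rpow_add hu]
  ring_nf

section Beta

variable {α1 β1 α2 β2 : ℝ}

theorem betaDensity_mul_abs_mul_betaDensity (hα1 : 0 < α1) (hβ1 : 0 < β1) {u r : ℝ}
    (hu : u ∈ Ioo (0 : ℝ) 1) (hr : 0 < r) (hur : u * r < 1) :
    betaDensity α1 β1 u * ENNReal.ofReal |u| * betaDensity α2 β2 (u * r) =
      ENNReal.ofReal (r ^ (α2 - 1) / (betaFn α1 β1 * betaFn α2 β2) *
        (u ^ (α1 + α2 - 1) * (1 - u) ^ (β1 - 1) * (1 - r * u) ^ (β2 - 1))) := by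
  have hf : 0 ≤ u ^ (α1 - 1) * (1 - u) ^ (β1 - 1) / betaFn α1 β1 :=
    div_nonneg (mul_nonneg (Real.rpow_nonneg hu.1.le _)
      (Real.rpow_nonneg (sub_nonneg.mpr hu.2.le) _)) (betaFn_pos hα1 hβ1).le
  have hur' : u * r ∈ Ioo (0 : ℝ) 1 := ⟨mul_pos hu.1 hr, hur⟩
  rw [betaDensity, betaDensity, indicator_of_mem hu, indicator_of_mem hur', abs_of_pos hu.1,
    ← ENNReal.ofReal_mul hf, ← ENNReal.ofReal_mul (mul_nonneg hf hu.1.le)]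
  congr 1
  rw [Real.mul_rpow hu.1.le hr.le, ← rpow_sub_one_mul_self_mul_rpow_sub_one hu.1 α1 α2,
    mul_comm r u]
  ring

theorem ratioDensity_betaDensity_of_nonpos {r : ℝ} (hr : r ≤ 0) :
    ratioDensity (betaDensity α1 β1) (betaDensity α2 β2) r = 0 := by
  refine (lintegral_congr fun u => ?_).trans lintegral_zero
  by_cases hu : u ∈ Ioo (0 : ℝ) 1
  · have hur : u * r ∉ Ioo (0 : ℝ) 1 := fun h =>
      h.1.not_ge (mul_nonpos_of_nonneg_of_nonpos hu.1.le hr)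
    rw [betaDensity_of_notMem hur, mul_zero]
  · rw [betaDensity_of_notMem hu, zero_mul, zero_mul]

theorem ratioDensity_betaDensity_of_le_one (hα1 : 0 < α1) (hβ1 : 0 < β1) {r : ℝ}
    (hr0 : 0 < r) (hr1 : r ≤ 1) :
    ratioDensity (betaDensity α1 β1) (betaDensity α2 β2) r =
      ∫⁻ u in Ioo (0 : ℝ) 1, ENNReal.ofReal (r ^ (α2 - 1) / (betaFn α1 β1 * betaFn α2 β2) *
        (u ^ (α1 + α2 - 1) * (1 - u) ^ (β1 - 1) * (1 - r * u) ^ (β2 - 1))) := by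
  rw [ratioDensity, ← lintegral_indicator measurableSet_Ioo]
  congr 1 with u
  by_cases hu : u ∈ Ioo (0 : ℝ) 1
  · rw [indicator_of_mem hu, betaDensity_mul_abs_mul_betaDensity hα1 hβ1 hu hr0
      (by nlinarith [hu.1, hu.2])]
  · rw [indicator_of_notMem hu, betaDensity_of_notMem hu, zero_mul, zero_mul]

theorem ratioDensity_betaDensity_of_one_lt (hα1 : 0 < α1) (hβ1 : 0 < β1) {r : ℝ} (hr : 1 < r) :
    ratioDensity (betaDensity α1 β1) (betaDensity α2 β2) r =
      ∫⁻ v in Ioo (0 : ℝ) 1, ENNReal.ofReal (r ^ (-(α1 + 1)) / (betaFn α1 β1 * betaFn α2 β2) *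
        (v ^ (α1 + α2 - 1) * (1 - v) ^ (β2 - 1) * (1 - v / r) ^ (β1 - 1))) := by
  have hr0 : 0 < r := one_pos.trans hr
  rw [ratioDensity, lintegral_eq_ofReal_abs_mul_lintegral_comp_mul_left (inv_ne_zero hr0.ne'),
    ← lintegral_const_mul' _ _ ENNReal.ofReal_ne_top, ← lintegral_indicator measurableSet_Ioo]
  congr 1 with v
  have hvr : r⁻¹ * v * r = v := by field_simp
  by_cases hv : v ∈ Ioo (0 : ℝ) 1
  · have hu : r⁻¹ * v ∈ Ioo (0 : ℝ) 1 :=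
      ⟨by have := hv.1; positivity, by rw [inv_mul_lt_iff₀ hr0]; linarith [hv.2]⟩
    rw [indicator_of_mem hv,
      betaDensity_mul_abs_mul_betaDensity hα1 hβ1 hu hr0 (hvr.symm ▸ hv.2),
      ← ENNReal.ofReal_mul (abs_nonneg _), abs_of_pos (inv_pos.mpr hr0)]
    congr 1
    have hpow : r ^ (α2 - 1) = r ^ (-(α1 + 1)) * r ^ (α1 + α2 - 1) * r := by
      rw [← Real.rpow_add hr0, ← Real.rpow_add_one hr0.ne']
      ring_nf
    rw [mul_comm r⁻¹ v, ← div_eq_mul_inv, Real.div_rpow hv.1.le hr0.le, mul_div_cancel₀ _ hr0.ne',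
      hpow]
    field_simp
  · rw [indicator_of_notMem hv, hvr, betaDensity_of_notMem hv, mul_zero, mul_zero]

theorem ratioDensity_betaDensity_eq (hα1 : 0 < α1) (hβ1 : 0 < β1) (hα2 : 0 < α2) (hβ2 : 0 < β2)
    {r : ℝ} (hfin : ratioDensity (betaDensity α1 β1) (betaDensity α2 β2) r ≠ ∞) :
    ratioDensity (betaDensity α1 β1) (betaDensity α2 β2) r = ENNReal.ofReal
      ((Ioi (0 : ℝ)).indicator
        (fun R =>
          if R ≤ 1 then
            R ^ (α2 - 1) / (betaFn α1 β1 * betaFn α2 β2) *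
              ∫ u in Ioo (0 : ℝ) 1,
                u ^ (α1 + α2 - 1) * (1 - u) ^ (β1 - 1) * (1 - R * u) ^ (β2 - 1)
          else
            R ^ (-(α1 + 1)) / (betaFn α1 β1 * betaFn α2 β2) *
              ∫ v in Ioo (0 : ℝ) 1,
                v ^ (α1 + α2 - 1) * (1 - v) ^ (β2 - 1) * (1 - v / R) ^ (β1 - 1)) r) := by
  have hB : 0 < betaFn α1 β1 * betaFn α2 β2 := mul_pos (betaFn_pos hα1 hβ1) (betaFn_pos hα2 hβ2)
  rcases le_or_gt r 0 with hr | hr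
  · rw [indicator_of_notMem (show r ∉ Ioi (0 : ℝ) from not_lt.mpr hr), ENNReal.ofReal_zero,
      ratioDensity_betaDensity_of_nonpos hr]
  rw [indicator_of_mem (show r ∈ Ioi (0 : ℝ) from hr)]
  split_ifs with hr1
  · rw [ratioDensity_betaDensity_of_le_one hα1 hβ1 hr hr1] at hfin ⊢
    rw [← integral_const_mul, ofReal_setIntegral_eq_setLIntegral measurableSet_Ioo _ _ hfin]
    · fun_prop
    · intro u hu
      have hu0 : 0 < u := hu.1
      have hu1 : 0 < 1 - u := sub_pos.mpr hu.2
      have hru : 0 < 1 - r * u := by nlinarith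
      positivity
  · rw [ratioDensity_betaDensity_of_one_lt hα1 hβ1 (not_le.mp hr1)] at hfin ⊢
    rw [← integral_const_mul, ofReal_setIntegral_eq_setLIntegral measurableSet_Ioo _ _ hfin]
    · fun_prop
    · intro v hv
      have hv0 : 0 < v := hv.1
      have hv1 : 0 < 1 - v := sub_pos.mpr hv.2
      have hvr : 0 < 1 - v / r := by rw [sub_pos, div_lt_one hr]; linarith [hv.2]
      positivity

end Beta

/-- The density of the ratio `R = V/U` of independent Beta random variables
`U ~ Beta(α1,β1)`, `V ~ Beta(α2,β2)`: for `0 < R ≤ 1` it is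
`R^{α2-1}/(B(α1,β1)B(α2,β2)) ∫₀¹ u^{α1+α2-1}(1-u)^{β1-1}(1-Ru)^{β2-1} du`,
and for `R > 1` it is
`R^{-(α1+1)}/(B(α1,β1)B(α2,β2)) ∫₀¹ v^{α1+α2-1}(1-v)^{β2-1}(1-v/R)^{β1-1} dv`.
This is the posterior of the risk ratio in Dallal's model under the reference prior. -/
theorem density_of_ratio_of_independent_betas
    {Ω : Type*} [MeasurableSpace Ω] (μ : Measure Ω) [IsProbabilityMeasure μ]
    (α1 β1 α2 β2 : ℝ) (hα1 : 0 < α1) (hβ1 : 0 < β1) (hα2 : 0 < α2) (hβ2 : 0 < β2)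
    (U V : Ω → ℝ) (hU : Measurable U) (hV : Measurable V)
    (hindep : IndepFun U V μ)
    (hUlaw : Measure.map U μ = betaLaw α1 β1)
    (hVlaw : Measure.map V μ = betaLaw α2 β2) :
    Measure.map (fun ω => V ω / U ω) μ =
      volume.withDensity (fun R => ENNReal.ofReal
        (Set.indicator (Set.Ioi (0 : ℝ))
          (fun R =>
            if R ≤ 1 then
              R ^ (α2 - 1) / (betaFn α1 β1 * betaFn α2 β2) *
                ∫ u in Set.Ioo (0 : ℝ) 1,
                  u ^ (α1 + α2 - 1) * (1 - u) ^ (β1 - 1) * (1 - R * u) ^ (β2 - 1)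
            else
              R ^ (-(α1 + 1)) / (betaFn α1 β1 * betaFn α2 β2) *
                ∫ v in Set.Ioo (0 : ℝ) 1,
                  v ^ (α1 + α2 - 1) * (1 - v) ^ (β2 - 1) * (1 - v / R) ^ (β1 - 1)) R)) := by
  set d := ratioDensity (betaDensity α1 β1) (betaDensity α2 β2)
  have hd : Measure.map (fun ω => V ω / U ω) μ = volume.withDensity d := by
    rw [← map_div_prod_withDensity (measurable_betaDensity _ _) (measurable_betaDensity _ _),
      ← betaLaw_eq_withDensity, ← betaLaw_eq_withDensity, ← hUlaw, ← hVlaw,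
      ← (indepFun_iff_map_prod_eq_prod_map_map hU.aemeasurable hV.aemeasurable).mp hindep,
      Measure.map_map (by fun_prop) (hU.prodMk hV)]
    rfl
  have hfin : ∀ᵐ r, d r ≠ ∞ := by
    have hmass : ∫⁻ r, d r = 1 := by
      have := Measure.isProbabilityMeasure_map (μ := μ) (hV.div hU).aemeasurable
      rw [← setLIntegral_univ, ← withDensity_apply _ MeasurableSet.univ, ← hd, measure_univ]
    exact (ae_lt_top (measurable_ratioDensity (measurable_betaDensity _ _)
      (measurable_betaDensity _ _)) (hmass ▸ ENNReal.one_ne_top)).mono fun r hr => hr.ne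
  rw [hd]
  exact withDensity_congr_ae
    (hfin.mono fun r hr => ratioDensity_betaDensity_eq hα1 hβ1 hα2 hβ2 hr)
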